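/- For all integers L ≥ 0 and A with -L ≤ A ≤ L, the normalized q-trinomial coefficient Q_1(L,A,q) = T_1(L,A,q)/(q)_L admits the representation Q_1(L,A,q) = Σ_{s=0, s ≡ L+A (mod 2)}^{∞} q^{s(s-1)/2} / ((q)_{(L-A-s)/2} (q)_{(L+A-s)/2} (q)_s), where the sum is effectively finite since terms with a negative Pochhammer index in a denominator vanish. -/

import Mathlib

open Finset

noncomputable section

/-- The field `F = RatFunc ℚ` of rational functions over `ℚ` in the variable `t`,
where `t` plays the role of `q^(1/2)`. -/
abbrev F : Type := RatFunc ℚ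

/-- The variable `t = q^(1/2)`. -/
def t : F := RatFunc.X

/-- `q = t^2`. -/
def q : F := t ^ 2

/-- The Pochhammer symbol `(a; b)_n = ∏_{k=0}^{n-1} (1 - a bᵏ)`, set equal to `0` for
negative `n` (so that any term containing a factor `1/(a;b)_n` with `n < 0` vanishes). -/
def poch (b a : F) (n : ℤ) : F :=
  if n < 0 then 0 else ∏ k ∈ Finset.range n.toNat, (1 - a * b ^ k)

/-- The `q`-trinomial coefficient `((L; B; qq))_{A,2}` with base `qq`:
`∑_j qq^(j(j+B)) (qq)_L / ((qq)_j (qq)_{j+A} (qq)_{L-2j-A})`; the sum is finite since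
terms with a negative Pochhammer index in the denominator vanish. -/
def trinom (qq : F) (L : ℕ) (B A : ℤ) : F :=
  ∑ j ∈ Finset.range (L + 1),
    qq ^ ((j : ℤ) * ((j : ℤ) + B)) * poch qq qq (L : ℤ) /
      (poch qq qq (j : ℤ) * poch qq qq ((j : ℤ) + A) *
        poch qq qq ((L : ℤ) - 2 * (j : ℤ) - A))

/-- `T_n(L, A, q) = q^((L(L-n) - A(A-n))/2) ((L; A-n; q⁻¹))_{A,2}`; note `t ^ m = q ^ (m/2)`. -/
def T (n : ℤ) (L : ℕ) (A : ℤ) : F :=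
  t ^ ((L : ℤ) * ((L : ℤ) - n) - A * (A - n)) * trinom q⁻¹ L (A - n) A

/-- `Q_n(L, A, q) = T_n(L, A, q) / (q)_L`. -/
def Q (n : ℤ) (L : ℕ) (A : ℤ) : F := T n L A / poch q q (L : ℤ)

/-!
Inverting the base, `(q⁻¹; q⁻¹)_n = (-1)^n q^(-n(n+1)/2) (q)_n`, turns the `j`-th term of
`T_1(L, A, q) / (q)_L` into `q^(s(s-1)/2) / ((q)_j (q)_(j+A) (q)_s)` with `s = L - 2j - A`:
the signs cancel because `L = j + (j + A) + s`, and the powers of `q` collapse to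
`q^(s(s-1)/2)`. Reindexing by `s` gives the fermionic sum, where `j = (L - A - s)/2` and
`j + A = (L + A - s)/2` are integers exactly when `s ≡ L + A (mod 2)`.
-/

lemma t_ne_zero : t ≠ 0 := RatFunc.X_ne_zero

lemma t_pow_ne_one {m : ℕ} (hm : m ≠ 0) : t ^ m ≠ 1 := by
  intro h
  have hX : (Polynomial.X ^ m : Polynomial ℚ) = 1 := by
    apply RatFunc.algebraMap_injective ℚ
    simpa [t, RatFunc.algebraMap_X] using h
  simpa [hm] using congrArg Polynomial.natDegree hX

lemma poch_natCast (b a : F) (n : ℕ) : poch b a n = ∏ k ∈ range n, (1 - a * b ^ k) := by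
  simp [poch]

lemma poch_of_neg (b a : F) {n : ℤ} (hn : n < 0) : poch b a n = 0 := if_pos hn

lemma poch_q_ne_zero (n : ℕ) : poch q q n ≠ 0 := by
  rw [poch_natCast, prod_ne_zero_iff]
  intro k _ h
  refine t_pow_ne_one (m := 2 * (k + 1)) (by omega) ?_
  rw [pow_mul, ← q, pow_succ']
  linear_combination -h

lemma poch_inv_inv (b : F) (hb : b ≠ 0) (n : ℕ) :
    poch b⁻¹ b⁻¹ n = (-1) ^ n * (∏ k ∈ range n, b ^ (k + 1))⁻¹ * poch b b n := by
  rw [poch_natCast, poch_natCast, ← prod_inv_distrib, ← card_range n, ← prod_const,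
    card_range, ← prod_mul_distrib, ← prod_mul_distrib]
  refine prod_congr rfl fun k _ => ?_
  rw [← pow_succ', ← pow_succ', inv_pow]
  field_simp
  ring

lemma prod_range_q_pow_succ (n : ℕ) : ∏ k ∈ range n, q ^ (k + 1) = t ^ (n * (n + 1)) := by
  induction n with
  | zero => simp
  | succ n ih => rw [prod_range_succ, ih, q, ← pow_mul, ← pow_add]; ring_nf

lemma poch_q_inv (n : ℕ) :
    poch q⁻¹ q⁻¹ n = (-1) ^ n * t ^ (-(n * (n + 1) : ℤ)) * poch q q n := by
  rw [poch_inv_inv q (pow_ne_zero 2 t_ne_zero), prod_range_q_pow_succ, zpow_neg]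
  norm_cast

lemma inv_q_zpow (e : ℤ) : q⁻¹ ^ e = t ^ (-2 * e) := by
  rw [q, ← zpow_natCast, ← zpow_neg_one, ← zpow_mul, ← zpow_mul]
  ring_nf

def fermionicTerm (a b s : ℤ) : F := t ^ (s * (s - 1)) / (poch q q a * poch q q b * poch q q s)

lemma fermionicTerm_of_neg {a b s : ℤ} (h : a < 0 ∨ b < 0 ∨ s < 0) :
    fermionicTerm a b s = 0 := by
  rcases h with h | h | h <;> simp [fermionicTerm, poch_of_neg _ _ h]

lemma nonneg_of_fermionicTerm_ne_zero {a b s : ℤ} (h : fermionicTerm a b s ≠ 0) :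
    0 ≤ a ∧ 0 ≤ b ∧ 0 ≤ s := by
  by_contra! hneg
  exact h (fermionicTerm_of_neg (by omega))

lemma trinom_summand_eq_fermionicTerm_of_nat (j m s : ℕ) :
    t ^ (((j + m + s : ℕ) : ℤ) * ((j + m + s : ℕ) - 1) - ((m : ℤ) - j) * ((m - j) - 1)) *
      (q⁻¹ ^ ((j : ℤ) * (j + ((m - j) - 1))) * poch q⁻¹ q⁻¹ (j + m + s : ℕ) /
        (poch q⁻¹ q⁻¹ j * poch q⁻¹ q⁻¹ m * poch q⁻¹ q⁻¹ s)) / poch q q (j + m + s : ℕ) =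
      fermionicTerm j m s := by
  have hsign : ((-1 : F) ^ (j + m + s)) = (-1) ^ j * (-1) ^ m * (-1) ^ s := by
    rw [pow_add, pow_add]
  have hexp :
      t ^ (((j + m + s : ℕ) : ℤ) * ((j + m + s : ℕ) - 1) - ((m : ℤ) - j) * ((m - j) - 1)) *
          t ^ (-2 * ((j : ℤ) * (j + ((m - j) - 1)))) *
          t ^ (-((j + m + s : ℕ) * ((j + m + s : ℕ) + 1) : ℤ)) =
        t ^ ((s : ℤ) * (s - 1)) *
          (t ^ (-(j * (j + 1) : ℤ)) * t ^ (-(m * (m + 1) : ℤ)) * t ^ (-(s * (s + 1) : ℤ))) := by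
    simp only [← zpow_add₀ t_ne_zero]
    congr 1
    push_cast
    ring
  rw [fermionicTerm, inv_q_zpow, poch_q_inv, poch_q_inv, poch_q_inv, poch_q_inv, hsign]
  have hL := poch_q_ne_zero (j + m + s)
  field_simp
  rw [hexp]
  field_simp [t_ne_zero]

lemma trinom_summand_eq_fermionicTerm (L j : ℕ) (A : ℤ) :
    t ^ ((L : ℤ) * (L - 1) - A * (A - 1)) *
      (q⁻¹ ^ ((j : ℤ) * (j + (A - 1))) * poch q⁻¹ q⁻¹ L /
        (poch q⁻¹ q⁻¹ j * poch q⁻¹ q⁻¹ (j + A) * poch q⁻¹ q⁻¹ (L - 2 * j - A))) / poch q q L =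
      fermionicTerm j (j + A) (L - 2 * j - A) := by
  by_cases hneg : j + A < 0 ∨ L - 2 * j - A < 0
  · rw [fermionicTerm_of_neg (by omega)]
    rcases hneg with h | h <;> simp [poch_of_neg _ _ h]
  obtain ⟨m, hm⟩ : ∃ m : ℕ, j + A = m := ⟨(j + A).toNat, by omega⟩
  obtain ⟨s, hs⟩ : ∃ s : ℕ, L - 2 * j - A = s := ⟨(L - 2 * j - A).toNat, by omega⟩
  obtain rfl : L = j + m + s := by omega
  obtain rfl : A = m - j := by omega
  rw [hm, hs, ← trinom_summand_eq_fermionicTerm_of_nat]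

lemma Q_one_eq_sum_fermionicTerm (L : ℕ) (A : ℤ) :
    Q 1 L A = ∑ j ∈ range (L + 1), fermionicTerm j (j + A) (L - 2 * j - A) := by
  rw [Q, T, trinom, mul_sum, sum_div]
  exact sum_congr rfl fun j _ => trinom_summand_eq_fermionicTerm L j A

lemma sum_fermionicTerm_reindex (L : ℕ) (A : ℤ) :
    ∑ j ∈ range (L + 1), fermionicTerm j (j + A) (L - 2 * j - A) =
      ∑ s ∈ range (L + 1), if ((s : ℤ) + L + A) % 2 = 0 then
        fermionicTerm ((L - A - s) / 2) ((L + A - s) / 2) s else 0 := by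
  refine sum_bij_ne_zero (fun j _ _ => (L - 2 * j - A).toNat) ?_ ?_ ?_ ?_
  · intro j hj hne
    have hidx := nonneg_of_fermionicTerm_ne_zero hne
    simp only [mem_range] at hj ⊢
    omega
  · intro j₁ _ hne₁ j₂ _ hne₂ h
    have hidx₁ := nonneg_of_fermionicTerm_ne_zero hne₁
    have hidx₂ := nonneg_of_fermionicTerm_ne_zero hne₂
    omega
  · intro s hs hne
    have hpar : ((s : ℤ) + L + A) % 2 = 0 := by
      by_contra h
      exact hne (if_neg h)
    rw [if_pos hpar] at hne
    have hidx := nonneg_of_fermionicTerm_ne_zero hne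
    refine ⟨((L - A - s) / 2).toNat, ?_, ?_, ?_⟩
    · simp only [mem_range] at hs ⊢
      omega
    · convert hne using 2 <;> omega
    · omega
  · intro j _ hne
    have hidx := nonneg_of_fermionicTerm_ne_zero hne
    rw [if_pos (by omega)]
    congr 1 <;> omega

/-- The infinite sum over `s` is truncated at `s = L`, beyond which all its terms vanish. -/
theorem Q_one_representation :
    ∀ (L : ℕ) (A : ℤ), -(L : ℤ) ≤ A → A ≤ (L : ℤ) →
      Q 1 L A = ∑ s ∈ Finset.range (L + 1),
        if ((s : ℤ) + (L : ℤ) + A) % 2 = 0 then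
          t ^ ((s : ℤ) * ((s : ℤ) - 1)) /
            (poch q q (((L : ℤ) - A - (s : ℤ)) / 2) *
              poch q q (((L : ℤ) + A - (s : ℤ)) / 2) * poch q q (s : ℤ))
        else 0 := by
  intro L A _ _
  rw [Q_one_eq_sum_fermionicTerm, sum_fermionicTerm_reindex]
  rfl
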